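/- arXiv:2408.02757 — 2 statements merged into one kernel-verified Lean document; each statement's English description precedes it below -/
import Mathlib

section
/- Fix an integer m ≥ 2 and a constant K > 0. Let a^X, a^Y : [0,∞) × Ω → ℝ be jointly measurable stochastic processes on a probability space (Ω, F, P) satisfying sup_{s ≥ 0} E[|a^X_s|^{2m}] ≤ K and sup_{s ≥ 0} E[|a^Y_s|^{2m}] ≤ K. For positive integers n, T and a positive integer k_n dividing n, for a block index j ∈ {1, …, n/k_n}, set i_{t,ℓ} = (t−1) + (ℓ−1)/n for t ∈ {1,…,T} and ℓ ∈ {1,…,n}, and define ζ₁ⁿ(t, τ_j) = (n/k_n) ∑_{ℓ=(j−1)k_n+1}^{j k_n} ( ∫_{i_{t,ℓ}}^{i_{t,ℓ+1}} a^X_s ds ) · ( ∫_{i_{t,ℓ}}^{i_{t,ℓ+1}} a^Y_s ds ), where the interval integrals are pathwise Lebesgue integrals (finite almost surely by the moment bounds). Then there exists a constant C, depending only on m and K, such that E[ | T^{−1} ∑_{t=1}^{T} ζ₁ⁿ(t, τ_j) |^{m} ] ≤ C / n^{m}. -/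
/-!
On a step of length `δ`, Hölder in time and Tonelli give
`E|∫ a_s ds|^{2m} ≤ δ^{2m-1} ∫ E|a_s|^{2m} ds ≤ δ^{2m} K`.
For the block sum over the `N = T k_n` pairs `(t, ℓ)`, the power-mean inequality and
`|xy|^m ≤ (x^{2m} + y^{2m}) / 2` give `E|c ∑ X_i Y_i|^m ≤ |c|^m N^m δ^{2m} K`.
With `c = n / (k_n T)` and `δ = 1 / n` this is `K / n^m`, so `C = K` works.
-/

open MeasureTheory intervalIntegral Finset
open scoped ENNReal

theorem lintegral_pow_le_measure_univ_pow_mul {α : Type*} [MeasurableSpace α] (μ : Measure α)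
    {g : α → ℝ≥0∞} (hg : AEMeasurable g μ) {p : ℕ} (hp : p ≠ 0) :
    (∫⁻ x, g x ∂μ) ^ p ≤ μ Set.univ ^ (p - 1) * ∫⁻ x, g x ^ p ∂μ := by
  have hp' : (0 : ℝ) < p := by positivity
  -- Hölder with exponents `p` and `p / (p - 1)` for `g` against the constant `1`
  have holder := ENNReal.lintegral_mul_norm_pow_le (μ := μ) (hg.pow_const p)
    (aemeasurable_const (b := (1 : ℝ≥0∞))) (inv_nonneg.2 hp'.le)
    (sub_nonneg.2 (inv_le_one_of_one_le₀ (by exact_mod_cast Nat.one_le_iff_ne_zero.2 hp)))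
    (add_sub_cancel (p⁻¹ : ℝ) 1)
  simp only [ENNReal.pow_rpow_inv_natCast hp, ENNReal.one_rpow, mul_one, lintegral_one] at holder
  calc (∫⁻ x, g x ∂μ) ^ p
      ≤ ((∫⁻ x, g x ^ p ∂μ) ^ (p⁻¹ : ℝ) * μ Set.univ ^ (1 - (p⁻¹ : ℝ))) ^ p :=
        pow_le_pow_left' holder p
    _ = μ Set.univ ^ (p - 1) * ∫⁻ x, g x ^ p ∂μ := by
      rw [mul_pow, ENNReal.rpow_inv_natCast_pow hp, ← ENNReal.rpow_mul_natCast, sub_mul,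
        inv_mul_cancel₀ hp'.ne', one_mul, ← Nat.cast_pred (Nat.pos_of_ne_zero hp),
        ENNReal.rpow_natCast, mul_comm]

theorem ofReal_abs_intervalIntegral_pow_le {f : ℝ → ℝ} (hf : Measurable f) {p : ℕ}
    (hp : p ≠ 0) {a b : ℝ} (hab : a ≤ b) :
    ENNReal.ofReal (|∫ s in a..b, f s| ^ p)
      ≤ ENNReal.ofReal (b - a) ^ (p - 1)
          * ∫⁻ s in Set.Ioc a b, ENNReal.ofReal (|f s| ^ p) := by
  have triangle : ENNReal.ofReal |∫ s in a..b, f s|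
      ≤ ∫⁻ s in Set.Ioc a b, ENNReal.ofReal |f s| := by
    simpa only [integral_of_le hab, ← Real.enorm_eq_ofReal_abs]
      using enorm_integral_le_lintegral_enorm _
  calc ENNReal.ofReal (|∫ s in a..b, f s| ^ p)
      = ENNReal.ofReal |∫ s in a..b, f s| ^ p := ENNReal.ofReal_pow (abs_nonneg _) p
    _ ≤ (∫⁻ s in Set.Ioc a b, ENNReal.ofReal |f s|) ^ p := pow_le_pow_left' triangle p
    _ ≤ ENNReal.ofReal (b - a) ^ (p - 1) * ∫⁻ s in Set.Ioc a b, ENNReal.ofReal |f s| ^ p := by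
      simpa only [Measure.restrict_apply_univ, Real.volume_Ioc] using
        lintegral_pow_le_measure_univ_pow_mul (volume.restrict (Set.Ioc a b))
          hf.abs.ennreal_ofReal.aemeasurable hp
    _ = _ := by simp only [ENNReal.ofReal_pow (abs_nonneg _)]

theorem lintegral_ofReal_abs_intervalIntegral_pow_le {Ω : Type*} [MeasurableSpace Ω]
    (P : Measure Ω) [SFinite P] {f : ℝ → Ω → ℝ} (hf : Measurable (Function.uncurry f))
    {p : ℕ} (hp : p ≠ 0) {K a b : ℝ} (hab : a ≤ b)
    (hmom : ∀ s ∈ Set.Ioc a b,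
      ∫⁻ ω, ENNReal.ofReal (|f s ω| ^ p) ∂P ≤ ENNReal.ofReal K) :
    ∫⁻ ω, ENNReal.ofReal (|∫ s in a..b, f s ω| ^ p) ∂P
      ≤ ENNReal.ofReal ((b - a) ^ p * K) := by
  have hf_swap : Measurable (Function.uncurry fun ω s ↦ ENNReal.ofReal (|f s ω| ^ p)) :=
    ((hf.comp measurable_swap).abs.pow_const p).ennreal_ofReal
  calc ∫⁻ ω, ENNReal.ofReal (|∫ s in a..b, f s ω| ^ p) ∂P
      ≤ ∫⁻ ω, ENNReal.ofReal (b - a) ^ (p - 1)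
          * (∫⁻ s in Set.Ioc a b, ENNReal.ofReal (|f s ω| ^ p)) ∂P :=
        lintegral_mono fun ω ↦
          ofReal_abs_intervalIntegral_pow_le (hf.comp measurable_prodMk_right) hp hab
    _ = ENNReal.ofReal (b - a) ^ (p - 1)
          * ∫⁻ s in Set.Ioc a b, ∫⁻ ω, ENNReal.ofReal (|f s ω| ^ p) ∂P := by
      rw [lintegral_const_mul' _ _ (by simp), lintegral_lintegral_swap hf_swap.aemeasurable]
    _ ≤ ENNReal.ofReal (b - a) ^ (p - 1) * ∫⁻ _ in Set.Ioc a b, ENNReal.ofReal K :=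
      mul_le_mul_right (setLIntegral_mono measurable_const hmom) _
    _ = ENNReal.ofReal ((b - a) ^ p * K) := by
      rw [setLIntegral_const, Real.volume_Ioc, ENNReal.ofReal_mul (by positivity),
        ENNReal.ofReal_pow (sub_nonneg.2 hab), mul_comm (ENNReal.ofReal K), ← mul_assoc,
        ← pow_succ, Nat.sub_add_cancel (Nat.one_le_iff_ne_zero.2 hp)]

theorem measurable_intervalIntegral_of_measurable_uncurry {Ω : Type*} [MeasurableSpace Ω]
    {f : ℝ → Ω → ℝ} (hf : Measurable (Function.uncurry f)) (a b : ℝ) :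
    Measurable fun ω ↦ ∫ s in a..b, f s ω :=
  (hf.stronglyMeasurable.integral_prod_left.measurable).sub
    hf.stronglyMeasurable.integral_prod_left.measurable

theorem mul_pow_le_add_pow_two_mul_div_two (x y : ℝ) (m : ℕ) :
    (x * y) ^ m ≤ (x ^ (2 * m) + y ^ (2 * m)) / 2 := by
  have := two_mul_le_add_sq (x ^ m) (y ^ m)
  rw [← pow_mul, ← pow_mul, mul_comm m 2] at this
  rw [mul_pow]
  linarith

theorem abs_mul_sum_mul_pow_le {ι : Type*} (N : Finset ι) (c : ℝ) (x y : ι → ℝ) {m : ℕ}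
    (hm : m ≠ 0) :
    |c * ∑ i ∈ N, x i * y i| ^ m
      ≤ |c| ^ m * #N ^ (m - 1) / 2 * ∑ i ∈ N, (|x i| ^ (2 * m) + |y i| ^ (2 * m)) := by
  obtain ⟨k, rfl⟩ := Nat.exists_eq_add_one_of_ne_zero hm
  calc |c * ∑ i ∈ N, x i * y i| ^ (k + 1)
      ≤ (|c| * ∑ i ∈ N, |x i| * |y i|) ^ (k + 1) := by
        rw [abs_mul]
        gcongr
        simpa only [abs_mul] using abs_sum_le_sum_abs (fun i ↦ x i * y i) N
    _ ≤ |c| ^ (k + 1) * (#N ^ k * ∑ i ∈ N, (|x i| * |y i|) ^ (k + 1)) := by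
        rw [mul_pow]
        gcongr
        exact pow_sum_le_card_mul_sum_pow (fun i _ ↦ by positivity) k
    _ ≤ |c| ^ (k + 1) * (#N ^ k
          * ∑ i ∈ N, (|x i| ^ (2 * (k + 1)) + |y i| ^ (2 * (k + 1))) / 2) := by
        gcongr with i
        exact mul_pow_le_add_pow_two_mul_div_two _ _ _
    _ = _ := by rw [← sum_div, Nat.add_sub_cancel]; ring

theorem lintegral_abs_mul_sum_mul_pow_le {Ω ι : Type*} [MeasurableSpace Ω] (P : Measure Ω)
    (N : Finset ι) (c : ℝ) {X Y : ι → Ω → ℝ} (hX : ∀ i ∈ N, Measurable (X i))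
    (hY : ∀ i ∈ N, Measurable (Y i)) {m : ℕ} (hm : m ≠ 0) {B : ℝ}
    (hXB : ∀ i ∈ N, ∫⁻ ω, ENNReal.ofReal (|X i ω| ^ (2 * m)) ∂P ≤ ENNReal.ofReal B)
    (hYB : ∀ i ∈ N, ∫⁻ ω, ENNReal.ofReal (|Y i ω| ^ (2 * m)) ∂P ≤ ENNReal.ofReal B) :
    ∫⁻ ω, ENNReal.ofReal (|c * ∑ i ∈ N, X i ω * Y i ω| ^ m) ∂P
      ≤ ENNReal.ofReal (|c| ^ m * #N ^ m * B) := by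
  set q : ℝ := |c| ^ m * #N ^ (m - 1) / 2
  have hq : 0 ≤ q := by positivity
  calc ∫⁻ ω, ENNReal.ofReal (|c * ∑ i ∈ N, X i ω * Y i ω| ^ m) ∂P
      ≤ ∫⁻ ω, ENNReal.ofReal q * ∑ i ∈ N,
          (ENNReal.ofReal (|X i ω| ^ (2 * m)) + ENNReal.ofReal (|Y i ω| ^ (2 * m))) ∂P := by
        refine lintegral_mono fun ω ↦ (ENNReal.ofReal_le_ofReal
          (abs_mul_sum_mul_pow_le N c (X · ω) (Y · ω) hm)).trans_eq ?_
        rw [ENNReal.ofReal_mul hq, ENNReal.ofReal_sum_of_nonneg fun i _ ↦ by positivity]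
        exact congrArg _ (sum_congr rfl fun i _ ↦
          ENNReal.ofReal_add (by positivity) (by positivity))
    _ = ENNReal.ofReal q * ∑ i ∈ N, (∫⁻ ω, ENNReal.ofReal (|X i ω| ^ (2 * m)) ∂P
          + ∫⁻ ω, ENNReal.ofReal (|Y i ω| ^ (2 * m)) ∂P) := by
        rw [lintegral_const_mul' _ _ ENNReal.ofReal_ne_top, lintegral_finsetSum N
          (f := fun i ω ↦
            ENNReal.ofReal (|X i ω| ^ (2 * m)) + ENNReal.ofReal (|Y i ω| ^ (2 * m)))
          fun i hi ↦ (((hX i hi).abs.pow_const _).ennreal_ofReal).add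
            ((hY i hi).abs.pow_const _).ennreal_ofReal]
        exact congrArg _ (sum_congr rfl fun i hi ↦
          lintegral_add_left ((hX i hi).abs.pow_const _).ennreal_ofReal _)
    _ ≤ ENNReal.ofReal q * ∑ _i ∈ N, (ENNReal.ofReal B + ENNReal.ofReal B) := by
        gcongr with i hi
        exacts [hXB i hi, hYB i hi]
    _ = ENNReal.ofReal (q * (#N * (2 * B))) := by
        rw [sum_const, nsmul_eq_mul, ← two_mul, ← ENNReal.ofReal_ofNat 2,
          ← ENNReal.ofReal_mul zero_le_two, ← ENNReal.ofReal_natCast,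
          ← ENNReal.ofReal_mul (Nat.cast_nonneg _), ← ENNReal.ofReal_mul hq]
    _ = ENNReal.ofReal (|c| ^ m * #N ^ m * B) := by
        obtain ⟨k, rfl⟩ := Nat.exists_eq_add_one_of_ne_zero hm
        simp only [q, Nat.add_sub_cancel]
        congr 1
        ring

theorem lintegral_abs_mul_sum_intervalIntegral_mul_pow_le {Ω ι : Type*} [MeasurableSpace Ω]
    (P : Measure Ω) [SFinite P] {aX aY : ℝ → Ω → ℝ}
    (hX : Measurable (Function.uncurry aX)) (hY : Measurable (Function.uncurry aY))
    {m : ℕ} (hm : m ≠ 0) {K : ℝ}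
    (hKX : ∀ s : ℝ, 0 ≤ s →
      ∫⁻ ω, ENNReal.ofReal (|aX s ω| ^ (2 * m)) ∂P ≤ ENNReal.ofReal K)
    (hKY : ∀ s : ℝ, 0 ≤ s →
      ∫⁻ ω, ENNReal.ofReal (|aY s ω| ^ (2 * m)) ∂P ≤ ENNReal.ofReal K)
    (N : Finset ι) (c : ℝ) {lo hi : ι → ℝ} {δ : ℝ} (hδ : 0 ≤ δ)
    (hlo : ∀ i ∈ N, 0 ≤ lo i) (hhi : ∀ i ∈ N, hi i - lo i = δ) :
    ∫⁻ ω, ENNReal.ofReal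
        (|c * ∑ i ∈ N, (∫ s in lo i..hi i, aX s ω) * ∫ s in lo i..hi i, aY s ω| ^ m) ∂P
      ≤ ENNReal.ofReal (|c| ^ m * #N ^ m * (δ ^ (2 * m) * K)) := by
  have hle : ∀ i ∈ N, lo i ≤ hi i := fun i hiN ↦ by linarith [hhi i hiN]
  have moment : ∀ {f : ℝ → Ω → ℝ}, Measurable (Function.uncurry f) →
      (∀ s : ℝ, 0 ≤ s →
        ∫⁻ ω, ENNReal.ofReal (|f s ω| ^ (2 * m)) ∂P ≤ ENNReal.ofReal K) →
      ∀ i ∈ N, ∫⁻ ω, ENNReal.ofReal (|∫ s in lo i..hi i, f s ω| ^ (2 * m)) ∂P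
        ≤ ENNReal.ofReal (δ ^ (2 * m) * K) := fun hf hK i hiN ↦ by
    rw [← hhi i hiN]
    exact lintegral_ofReal_abs_intervalIntegral_pow_le P hf (by omega) (hle i hiN)
      fun s hs ↦ hK s ((hlo i hiN).trans hs.1.le)
  exact lintegral_abs_mul_sum_mul_pow_le P N c
    (fun i _ ↦ measurable_intervalIntegral_of_measurable_uncurry hX _ _)
    (fun i _ ↦ measurable_intervalIntegral_of_measurable_uncurry hY _ _) hm
    (moment hX hKX) (moment hY hKY)

/-- Drift–drift term bound (Lemma 1 of the appendix): for fixed `m ≥ 2` and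
`K > 0`, there is a constant `C > 0` depending only on `m` and `K` such that for
all processes `a^X, a^Y` with `sup_s E[|a^•_s|^{2m}] ≤ K`, all `n, T, k_n` and
block index `j`, one has `E[|T⁻¹ ∑_{t=1}^T ζ₁ⁿ(t, τ_j)|^m] ≤ C / n^m`, where
`ζ₁ⁿ(t, τ_j) = (n/k_n) ∑_{ℓ=(j−1)k_n+1}^{j k_n}
  (∫_{i_{t,ℓ}}^{i_{t,ℓ+1}} a^X_s ds)(∫_{i_{t,ℓ}}^{i_{t,ℓ+1}} a^Y_s ds)`
with `i_{t,ℓ} = (t−1) + (ℓ−1)/n`. -/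
theorem drift_drift_term_bound (m : ℕ) (hm : 2 ≤ m) (K : ℝ) (hK : 0 < K) :
    ∃ C > 0, ∀ (Ω : Type) (_ : MeasurableSpace Ω) (P : Measure Ω),
      IsProbabilityMeasure P →
      ∀ aX aY : ℝ → Ω → ℝ,
      Measurable (Function.uncurry aX) →
      Measurable (Function.uncurry aY) →
      (∀ s : ℝ, 0 ≤ s →
        ∫⁻ ω, ENNReal.ofReal (|aX s ω| ^ (2 * m)) ∂P ≤ ENNReal.ofReal K) →
      (∀ s : ℝ, 0 ≤ s →
        ∫⁻ ω, ENNReal.ofReal (|aY s ω| ^ (2 * m)) ∂P ≤ ENNReal.ofReal K) →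
      ∀ n T kn : ℕ, 0 < n → 0 < T → 0 < kn → kn ∣ n →
      ∀ j : ℕ, 1 ≤ j → j ≤ n / kn →
      ∫⁻ ω, ENNReal.ofReal
          (|(∑ t ∈ Finset.Icc 1 T,
              ((n : ℝ) / (kn : ℝ)) *
                ∑ ℓ ∈ Finset.Icc ((j - 1) * kn + 1) (j * kn),
                  (∫ s in ((t : ℝ) - 1 + ((ℓ : ℝ) - 1) / (n : ℝ))..(
                      (t : ℝ) - 1 + (ℓ : ℝ) / (n : ℝ)), aX s ω) *
                  (∫ s in ((t : ℝ) - 1 + ((ℓ : ℝ) - 1) / (n : ℝ))..(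
                      (t : ℝ) - 1 + (ℓ : ℝ) / (n : ℝ)), aY s ω)) / (T : ℝ)| ^ m)
        ∂P ≤ ENNReal.ofReal (C / (n : ℝ) ^ m) := by
  refine ⟨K, hK, fun Ω _ P _ aX aY hX hY hKX hKY n T kn hn hT hkn _ j hj _ ↦ ?_⟩
  set N := Icc 1 T ×ˢ Icc ((j - 1) * kn + 1) (j * kn) with hN_def
  have hN : #N = T * kn := by
    obtain ⟨i, rfl⟩ := Nat.exists_eq_add_of_le' hj
    simp [N, add_mul]
  have hlo : ∀ p ∈ N, (0 : ℝ) ≤ p.1 - 1 + ((p.2 : ℝ) - 1) / n := by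
    intro p hp
    simp only [N, mem_product, mem_Icc] at hp
    have h1 : (1 : ℝ) ≤ p.1 := by exact_mod_cast hp.1.1
    have h2 : (1 : ℝ) ≤ p.2 := by exact_mod_cast (Nat.le_add_left 1 _).trans hp.2.1
    have := div_nonneg (sub_nonneg.2 h2) (Nat.cast_nonneg n)
    linarith
  have hhi : ∀ p ∈ N,
      ((p.1 : ℝ) - 1 + p.2 / n) - (p.1 - 1 + ((p.2 : ℝ) - 1) / n) = 1 / n := by
    intro p _
    field_simp
    ring
  have key := lintegral_abs_mul_sum_intervalIntegral_mul_pow_le P hX hY (by omega) hKX hKY N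
    ((n : ℝ) / kn / T) (by positivity) hlo hhi
  rw [hN, hN_def] at key
  simp only [sum_product] at key
  refine (lintegral_congr fun ω ↦ ?_).trans_le (key.trans_eq ?_)
  · rw [← mul_sum, mul_div_right_comm]
  · congr 1
    have hcancel : (n : ℝ) / kn / T * (T * kn) * (1 / n) ^ 2 = 1 / n := by field_simp
    rw [abs_of_nonneg (by positivity), Nat.cast_mul, pow_mul, ← mul_assoc, ← mul_pow,
      ← mul_pow, hcancel, one_div_pow, one_div_mul_eq_div]
end

section
/- Let c₁ > 0, c₂ > 0, c₁₂ ∈ ℝ, let E₁ > 0, E₃ > 0, E₂ ≠ 0 be real numbers, and let V be a real symmetric 3 × 3 matrix. Let u = (c₁, c₁₂, c₂)ᵀ, define Γ = (u uᵀ) ⊙ V (entrywise Hadamard product), and define the row vector w = ( c₁₂ E₂ / (c₁ E₁), −2, c₁₂ E₂ / (c₂ E₃) ). Then (4 c₁ c₂ E₁ E₃)^{−1} · w Γ wᵀ = ρ² · e² · γ̄, where ρ² = c₁₂² / (c₁ c₂), e² = E₂² / (E₁ E₃), and γ̄ = V₁₁/(4E₁²) − V₁₂/(E₁E₂) + V₂₂/E₂²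 + V₁₃/(2E₁E₃) − V₂₃/(E₃E₂) + V₃₃/(4E₃²). In particular, γ̄ does not depend on (c₁, c₁₂, c₂). -/
open Matrix

/-- Simplification of the asymptotic variance quadratic form: with
`u = (c₁, c₁₂, c₂)`, `Γ = (u uᵀ) ⊙ V` (Hadamard product) for a symmetric `V`, and
`w = (c₁₂E₂/(c₁E₁), −2, c₁₂E₂/(c₂E₃))`, one has
`(4c₁c₂E₁E₃)⁻¹ · w Γ wᵀ = ρ² e² γ̄` with `ρ² = c₁₂²/(c₁c₂)`, `e² = E₂²/(E₁E₃)` and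
`γ̄ = V₁₁/(4E₁²) − V₁₂/(E₁E₂) + V₂₂/E₂² + V₁₃/(2E₁E₃) − V₂₃/(E₃E₂) + V₃₃/(4E₃²)`,
which does not depend on `(c₁, c₁₂, c₂)`. -/
theorem variance_quadratic_form_simplification
    (c₁ c₂ c₁₂ E₁ E₂ E₃ : ℝ) (hc₁ : 0 < c₁) (hc₂ : 0 < c₂)
    (hE₁ : 0 < E₁) (hE₃ : 0 < E₃) (hE₂ : E₂ ≠ 0)
    (V : Matrix (Fin 3) (Fin 3) ℝ) (hV : V.IsSymm) :
    (4 * c₁ * c₂ * E₁ * E₃)⁻¹ *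
        (∑ i : Fin 3, ∑ j : Fin 3,
          (![c₁₂ * E₂ / (c₁ * E₁), -2, c₁₂ * E₂ / (c₂ * E₃)] i) *
            ((![c₁, c₁₂, c₂] i * ![c₁, c₁₂, c₂] j) * V i j) *
            (![c₁₂ * E₂ / (c₁ * E₁), -2, c₁₂ * E₂ / (c₂ * E₃)] j))
      = (c₁₂ ^ 2 / (c₁ * c₂)) * (E₂ ^ 2 / (E₁ * E₃)) *
          (V 0 0 / (4 * E₁ ^ 2) - V 0 1 / (E₁ * E₂) + V 1 1 / E₂ ^ 2
            + V 0 2 / (2 * E₁ * E₃) - V 1 2 / (E₃ * E₂) + V 2 2 / (4 * E₃ ^ 2)) := by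
  have h10 : V 1 0 = V 0 1 := by rw [← hV.apply]
  have h20 : V 2 0 = V 0 2 := by rw [← hV.apply]
  have h21 : V 2 1 = V 1 2 := by rw [← hV.apply]
  simp only [Fin.sum_univ_three, Matrix.cons_val_zero, Matrix.cons_val_one, Matrix.head_cons,
    Matrix.cons_val_two, Matrix.tail_cons, h10, h20, h21]
  field_simp
  ring
end
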